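/- arXiv:1510.07852 — 4 statements merged into one kernel-verified Lean document; each statement's English description precedes it below -/
import Mathlib

section
/- Let R be a commutative ring, d ≥ 1 an integer, and let g ∈ R[t_1,…,t_d] be a symmetric polynomial (invariant under every permutation of the variables). Set Λ := g · ∏_{1≤i<j≤d}(t_i − t_j). Then for every integer e ≥ d, the coefficient of the monomial ∏_{j=1}^{d} t_j^{e−j} in Λ · ∏_{1≤i<j≤d}(t_i + t_j) equals the coefficient of the same monomial ∏_{j=1}^{d} t_j^{e−j} in Λ · ∏_{j=1}^{d} t_j^{j−1}. -/
/-!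
Up to the same sign, `∏_{i<j} (t_i - t_j)(t_i + t_j)` is the Vandermonde determinant in the
`t_i²`, and `∏_{i<j} (t_i - t_j)` is the Vandermonde determinant in the `t_i`. Expanding over
permutations, with `δ = (0, 1, …, d-1)`, the `σ`-term on the left is `sign σ · t^{2δ∘σ⁻¹}` and
the `σ⁻¹`-term on the right is `sign σ · t^{δ∘σ + δ}`. Renaming the variables by `σ`, which fixes
the symmetric `g`, turns the coefficient of `t^μ` in `g · t^{2δ∘σ⁻¹}` into that of `t^{μ∘σ}` in
`g · t^{2δ}`; as `μ∘σ + (δ∘σ + δ) = μ + 2δ` (no truncated subtraction occurs since `e ≥ d`),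
this is the coefficient of `t^μ` in `g · t^{δ∘σ + δ}`.
-/

open MvPolynomial Finset Matrix Equiv

theorem prod_Ioi_sub_eq_mul_det_vandermonde {S : Type*} [CommRing S] {n : ℕ} (v : Fin n → S) :
    ∏ i : Fin n, ∏ j ∈ Ioi i, (v i - v j)
      = (∏ i : Fin n, ∏ _j ∈ Ioi i, (-1 : S)) * (vandermonde v).det := by
  rw [det_vandermonde, ← prod_mul_distrib]
  refine prod_congr rfl fun i _ => ?_
  rw [← prod_mul_distrib]
  exact prod_congr rfl fun _ _ => by ring

theorem prod_Ioi_sub_mul_prod_Ioi_add {S : Type*} [CommRing S] {n : ℕ} (v : Fin n → S) :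
    (∏ i : Fin n, ∏ j ∈ Ioi i, (v i - v j)) * ∏ i : Fin n, ∏ j ∈ Ioi i, (v i + v j)
      = ∏ i : Fin n, ∏ j ∈ Ioi i, (v i ^ 2 - v j ^ 2) := by
  rw [← prod_mul_distrib]
  refine prod_congr rfl fun i _ => ?_
  rw [← prod_mul_distrib]
  exact prod_congr rfl fun _ _ => by ring

namespace MvPolynomial

variable {ι R : Type*} [CommRing R]

theorem prod_X_perm_pow_eq_monomial [Fintype ι] (σ : Perm ι) (a : ι →₀ ℕ) :
    ∏ i, (X (σ i) : MvPolynomial ι R) ^ a i = monomial (a.mapDomain σ) 1 := by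
  classical
  rw [monomial_eq, C_1, one_mul, Finsupp.prod_fintype _ _ fun _ => pow_zero _,
    ← Equiv.prod_comp σ (fun k => X k ^ (a.mapDomain σ) k)]
  simp [Finsupp.mapDomain_equiv_apply]

theorem coeff_mul_monomial_eq_of_add_eq_add {m a m' a' : ι →₀ ℕ} (h : m + a' = m' + a)
    (p : MvPolynomial ι R) (r : R) :
    coeff m (p * monomial a r) = coeff m' (p * monomial a' r) := by
  have hswap : p * monomial a r * monomial a' 1 = p * monomial a' r * monomial a 1 := by
    rw [mul_assoc, mul_assoc, monomial_mul, monomial_mul, add_comm]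
  rw [← mul_one (coeff m _), ← coeff_mul_monomial m a', h, hswap, coeff_mul_monomial, mul_one]

theorem IsSymmetric.coeff_mapDomain_mul_monomial {g : MvPolynomial ι R} (hg : g.IsSymmetric)
    (σ : Perm ι) (m a : ι →₀ ℕ) (r : R) :
    coeff (m.mapDomain σ) (g * monomial (a.mapDomain σ) r) = coeff m (g * monomial a r) := by
  conv_rhs => rw [← coeff_rename_mapDomain σ σ.injective, map_mul, hg σ, rename_monomial]

noncomputable def staircase (n : ℕ) : Fin n →₀ ℕ :=
  Finsupp.equivFunOnFinite.symm fun i => i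

variable {n : ℕ}

theorem det_vandermonde_X_pow (k : ℕ) :
    (vandermonde fun i : Fin n => (X i : MvPolynomial (Fin n) R) ^ k).det
      = ∑ σ : Perm (Fin n), monomial ((k • staircase n).mapDomain σ) ((Perm.sign σ : ℤ) : R) := by
  rw [det_apply']
  refine sum_congr rfl fun σ _ => ?_
  rw [← mul_one ((Perm.sign σ : ℤ) : R), ← C_mul_monomial, map_intCast,
    ← prod_X_perm_pow_eq_monomial]
  simp [staircase, pow_mul]

theorem IsSymmetric.coeff_mul_monomial_perm_staircase {g : MvPolynomial (Fin n) R}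
    (hg : g.IsSymmetric) {e : ℕ} (he : n ≤ e) (σ : Perm (Fin n)) (r : R) :
    coeff (Finsupp.equivFunOnFinite.symm fun j : Fin n => e - ((j : ℕ) + 1))
        (g * monomial ((2 • staircase n).mapDomain σ) r)
      = coeff (Finsupp.equivFunOnFinite.symm fun j : Fin n => e - ((j : ℕ) + 1))
        (g * monomial ((staircase n).mapDomain ⇑σ⁻¹ + staircase n) r) := by
  set μ : Fin n →₀ ℕ := Finsupp.equivFunOnFinite.symm fun j => e - ((j : ℕ) + 1)
  set ν : Fin n →₀ ℕ := Finsupp.equivFunOnFinite.symm fun j => e - ((σ j : ℕ) + 1)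
  have hμν : μ = ν.mapDomain σ := by
    ext k
    simp [μ, ν, Finsupp.mapDomain_equiv_apply]
  calc coeff μ (g * monomial ((2 • staircase n).mapDomain σ) r)
      = coeff ν (g * monomial (2 • staircase n) r) := by
        rw [hμν, hg.coeff_mapDomain_mul_monomial]
    _ = coeff μ (g * monomial ((staircase n).mapDomain ⇑σ⁻¹ + staircase n) r) := by
        refine coeff_mul_monomial_eq_of_add_eq_add (Finsupp.ext fun k => ?_) g r
        have hk := k.is_lt
        have hσk := (σ k).is_lt
        simp [μ, ν, staircase, Finsupp.mapDomain_equiv_apply]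
        omega

theorem IsSymmetric.coeff_mul_det_vandermonde_X_sq {g : MvPolynomial (Fin n) R}
    (hg : g.IsSymmetric) {e : ℕ} (he : n ≤ e) :
    coeff (Finsupp.equivFunOnFinite.symm fun j : Fin n => e - ((j : ℕ) + 1))
        (g * (vandermonde fun i => (X i : MvPolynomial (Fin n) R) ^ 2).det)
      = coeff (Finsupp.equivFunOnFinite.symm fun j : Fin n => e - ((j : ℕ) + 1))
        (g * (vandermonde X).det * monomial (staircase n) 1) := by
  have hX : vandermonde (X : Fin n → MvPolynomial (Fin n) R) = vandermonde fun i => X i ^ 1 := by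
    simp only [pow_one]
  simp only [hX, det_vandermonde_X_pow, mul_assoc, sum_mul, monomial_mul, mul_one, one_smul,
    mul_sum, coeff_sum]
  refine Fintype.sum_equiv (Equiv.inv _) _ _ fun σ => ?_
  rw [Equiv.inv_apply, Perm.sign_inv]
  exact hg.coeff_mul_monomial_perm_staircase he σ _

end MvPolynomial

theorem stmt_1_general {R : Type*} [CommRing R] (d : ℕ)
    (g : MvPolynomial (Fin d) R)
    (hg : ∀ σ : Equiv.Perm (Fin d), MvPolynomial.rename σ g = g)
    (e : ℕ) (he : d ≤ e) :
    MvPolynomial.coeff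
      (Finsupp.equivFunOnFinite.symm fun j : Fin d => e - ((j : ℕ) + 1))
      ((g * ∏ i : Fin d, ∏ j ∈ Finset.Ioi i,
          (MvPolynomial.X i - MvPolynomial.X j)) *
        ∏ i : Fin d, ∏ j ∈ Finset.Ioi i, (MvPolynomial.X i + MvPolynomial.X j))
    = MvPolynomial.coeff
      (Finsupp.equivFunOnFinite.symm fun j : Fin d => e - ((j : ℕ) + 1))
      ((g * ∏ i : Fin d, ∏ j ∈ Finset.Ioi i,
          (MvPolynomial.X i - MvPolynomial.X j)) *
        ∏ j : Fin d, MvPolynomial.X j ^ (j : ℕ)) := by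
  have hsign : (∏ i : Fin d, ∏ _j ∈ Ioi i, (-1 : MvPolynomial (Fin d) R))
      = C (∏ i : Fin d, ∏ _j ∈ Ioi i, (-1 : R)) := by
    simp only [map_prod, map_neg, map_one]
  have hstair : ∏ j : Fin d, (X j : MvPolynomial (Fin d) R) ^ (j : ℕ)
      = monomial (staircase d) 1 := by
    simpa [staircase] using prod_X_perm_pow_eq_monomial (R := R) 1 (staircase d)
  rw [mul_assoc, prod_Ioi_sub_mul_prod_Ioi_add, prod_Ioi_sub_eq_mul_det_vandermonde,
    prod_Ioi_sub_eq_mul_det_vandermonde, hsign, hstair, mul_left_comm, mul_left_comm g,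
    mul_assoc, coeff_C_mul, coeff_C_mul]
  congr 1
  exact IsSymmetric.coeff_mul_det_vandermonde_X_sq hg he

/-- Lemma 5.4 of the paper: for an antisymmetric polynomial
`Λ = g * ∏_{i<j}(t_i - t_j)` (with `g` symmetric), and any `e ≥ d`, the coefficient of
`∏_j t_j^{e-j}` in `Λ * ∏_{i<j}(t_i + t_j)` equals the coefficient of the same monomial
in `Λ * ∏_j t_j^{j-1}`. -/
theorem stmt_1 {R : Type*} [CommRing R] (d : ℕ) (hd : 1 ≤ d)
    (g : MvPolynomial (Fin d) R)
    (hg : ∀ σ : Equiv.Perm (Fin d), MvPolynomial.rename σ g = g)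
    (e : ℕ) (he : d ≤ e) :
    MvPolynomial.coeff
      (Finsupp.equivFunOnFinite.symm fun j : Fin d => e - ((j : ℕ) + 1))
      ((g * ∏ i : Fin d, ∏ j ∈ Finset.Ioi i,
          (MvPolynomial.X i - MvPolynomial.X j)) *
        ∏ i : Fin d, ∏ j ∈ Finset.Ioi i, (MvPolynomial.X i + MvPolynomial.X j))
    = MvPolynomial.coeff
      (Finsupp.equivFunOnFinite.symm fun j : Fin d => e - ((j : ℕ) + 1))
      ((g * ∏ i : Fin d, ∏ j ∈ Finset.Ioi i,
          (MvPolynomial.X i - MvPolynomial.X j)) *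
        ∏ j : Fin d, MvPolynomial.X j ^ (j : ℕ)) :=
  stmt_1_general d g hg e he
end

section
/- Let R be a commutative ring, n ≥ 1 and 1 ≤ d ≤ n − 1 integers. Let λ = (λ_1,…,λ_d) ∈ ℕ^d, let s : ℤ → R satisfy s(k) = 0 for all k < 0, and let N ∈ ℕ satisfy N ≥ λ_i + d − 1 for all i. Then the coefficient of the monomial ∏_{j=1}^{d} t_j^{N+n−j} in the polynomial det((t_j^{λ_i+d−i})_{1≤i,j≤d}) · ∏_{j=1}^{d} Ŝ_N(t_j) equals the determinant of the d×d matrix whose (i,j) entry is s(λ_i − (n − d) + j − i). -/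
/-!
Expand the determinant by Leibniz. For a permutation `σ` the term is `±∏ⱼ tⱼ^{aⱼ}` with
`aⱼ = λ_{σ j} + d - 1 - σ j ≤ N`; multiplied by `∏ⱼ Ŝ_N(tⱼ)` it is a product of polynomials in
separate variables, so its coefficient at `∏ⱼ tⱼ^{mⱼ}` is the product of the coefficients of
`tⱼ^{mⱼ}` in `tⱼ^{aⱼ} Ŝ_N(tⱼ)`, namely `s(aⱼ + N - mⱼ)`. With `mⱼ = N + n - 1 - j` this is the
entry `(σ j, j)` of `(s(λ_i - (n - d) + j - i))`, and the Leibniz expansion of that determinant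
reassembles.
-/

open MvPolynomial Finset

section

variable {R σ ι : Type*} [CommRing R] [Fintype σ]

theorem MvPolynomial.coeff_prod_sum_C_mul_X_pow (t : σ → Finset ι)
    (c : σ → ι → R) (e : σ → ι → ℕ) (m : σ → ℕ) :
    coeff (Finsupp.equivFunOnFinite.symm m) (∏ j, ∑ k ∈ t j, C (c j k) * X j ^ e j k)
      = ∏ j, ∑ k ∈ t j, if e j k = m j then c j k else 0 := by
  classical
  simp_rw [C_mul_X_pow_eq_monomial]
  rw [prod_univ_sum, coeff_sum, prod_univ_sum]
  refine sum_congr rfl fun g _ => ?_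
  rw [← monomial_sum_prod, ← Finsupp.equivFunOnFinite_symm_eq_sum, coeff_monomial,
    Fintype.prod_ite_zero]
  simp only [EmbeddingLike.apply_eq_iff_eq]
  exact if_congr _root_.funext_iff rfl rfl

theorem sum_range_ite_add_tsub_eq (s : ℤ → R) (hs : ∀ k : ℤ, k < 0 → s k = 0)
    {a m : ℕ} (N : ℕ) (ham : a ≤ m) :
    ∑ k ∈ range (N + 1), (if a + (N - k) = m then s k else 0) = s (a + N - m) := by
  by_cases hm : m ≤ a + N
  · have hk : ∀ k ∈ range (N + 1), (a + (N - k) = m ↔ a + N - m = k) := by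
      intro k hkN
      rw [mem_range] at hkN
      omega
    rw [sum_congr rfl fun k hkN => if_congr (hk k hkN) rfl rfl, sum_ite_eq,
      if_pos (mem_range.2 (by omega))]
    congr 1
    omega
  · rw [hs _ (by omega)]
    refine sum_eq_zero fun k _ => if_neg ?_
    omega

theorem MvPolynomial.coeff_prod_X_pow_mul_prod_reversedSegre (s : ℤ → R)
    (hs : ∀ k : ℤ, k < 0 → s k = 0) (N : ℕ) {a m : σ → ℕ} (ham : ∀ j, a j ≤ m j) :
    coeff (Finsupp.equivFunOnFinite.symm m)
      ((∏ j, X j ^ a j) * ∏ j, ∑ k ∈ range (N + 1), C (s k) * X j ^ (N - k))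
      = ∏ j, s (a j + N - m j) := by
  classical
  have hshift : ∀ j, X j ^ a j * ∑ k ∈ range (N + 1), C (s k) * X j ^ (N - k)
      = ∑ k ∈ range (N + 1), C (s k) * X j ^ (a j + (N - k)) := fun j => by
    simp_rw [mul_sum, pow_add]
    exact sum_congr rfl fun _ _ => mul_left_comm _ _ _
  simp_rw [← prod_mul_distrib, hshift, coeff_prod_sum_C_mul_X_pow,
    sum_range_ite_add_tsub_eq s hs N (ham _)]

end

theorem stmt_5_general {R : Type*} [CommRing R] (n d : ℕ)
    (hd : d + 1 ≤ n)
    (lam : Fin d → ℕ) (s : ℤ → R) (hs : ∀ k : ℤ, k < 0 → s k = 0)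
    (N : ℕ) (hN : ∀ i : Fin d, lam i + d - 1 ≤ N) :
    MvPolynomial.coeff
      (Finsupp.equivFunOnFinite.symm fun j : Fin d => N + (n - ((j : ℕ) + 1)))
      (Matrix.det (Matrix.of fun i j : Fin d =>
          MvPolynomial.X j ^ (lam i + (d - ((i : ℕ) + 1)))) *
        ∏ j : Fin d, ∑ k ∈ Finset.range (N + 1),
          MvPolynomial.C (s k) * MvPolynomial.X j ^ (N - k))
    = Matrix.det (Matrix.of fun i j : Fin d =>
        s ((lam i : ℤ) - ((n : ℤ) - (d : ℤ)) + ((j : ℕ) : ℤ) - ((i : ℕ) : ℤ))) := by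
  rw [Matrix.det_apply, Matrix.det_apply, sum_mul, coeff_sum]
  refine sum_congr rfl fun σ _ => ?_
  rw [Units.smul_def, Units.smul_def, smul_mul_assoc, coeff_smul]
  simp only [Matrix.of_apply]
  rw [coeff_prod_X_pow_mul_prod_reversedSegre s hs N fun j => by have := hN (σ j); omega]
  congr 1
  refine prod_congr rfl fun j _ => congrArg s ?_
  have := (σ j).isLt
  have := j.isLt
  omega

/-- Algebraic core of Proposition 5.5 (type A Grassmann bundle): the coefficient of
`∏_j t_j^{N+n-j}` in `det(t_j^{λ_i+d-i}) ⬝ ∏_j Ŝ_N(t_j)` equals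
`det(s(λ_i - (n-d) + j - i))`. -/
theorem stmt_5 {R : Type*} [CommRing R] (n d : ℕ) (hn : 1 ≤ n)
    (hd1 : 1 ≤ d) (hd : d + 1 ≤ n)
    (lam : Fin d → ℕ) (s : ℤ → R) (hs : ∀ k : ℤ, k < 0 → s k = 0)
    (N : ℕ) (hN : ∀ i : Fin d, lam i + d - 1 ≤ N) :
    MvPolynomial.coeff
      (Finsupp.equivFunOnFinite.symm fun j : Fin d => N + (n - ((j : ℕ) + 1)))
      (Matrix.det (Matrix.of fun i j : Fin d =>
          MvPolynomial.X j ^ (lam i + (d - ((i : ℕ) + 1)))) *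
        ∏ j : Fin d, ∑ k ∈ Finset.range (N + 1),
          MvPolynomial.C (s k) * MvPolynomial.X j ^ (N - k))
    = Matrix.det (Matrix.of fun i j : Fin d =>
        s ((lam i : ℤ) - ((n : ℤ) - (d : ℤ)) + ((j : ℕ) : ℤ) - ((i : ℕ) : ℤ))) :=
  stmt_5_general n d hd lam s hs N hN
end

section
/- Let R be a commutative ring, n ≥ 1 and 1 ≤ d ≤ n integers. Let λ = (λ_1,…,λ_d) ∈ ℕ^d, let s : ℤ → R satisfy s(k) = 0 for all k < 0, and let N ∈ ℕ satisfy N ≥ λ_i + 2d for all i. Then the coefficient of the monomial ∏_{j=1}^{d} t_j^{N+2n−j} in the polynomial det((t_j^{λ_i+d−i})_{1≤i,j≤d}) · ∏_{1≤i<j≤d}(t_i + t_j) · ∏_{j=1}^{d} Ŝ_N(t_j) equals the determinant of the d×d matrix whose (i,j) entry is s(λ_i − (2n − d + 1 − i) + 2(j − i)). -/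
/-!
Replace `s` by its truncation `t` above `N`. As `t` vanishes outside `[0, N]`, the coefficient of
`∏ x_j^{e_j}` in `Q · ∏_j Ŝ_N(x_j)` is `Σ_u Q_u ∏_j T(u_j + j)` with `T(k) = t(k + 1 - 2n)`, i.e.
`L(x^δ Q)` for the symmetric functional `L(x^u) = ∏_j T(u_j)`. For a symmetric functional the
alternation `alt = Σ_σ sgn σ · σ` is self-adjoint: `L(alt(A) B) = L(A alt(B))`. Since
`det(x_j^{a_i}) = alt(x^a)`, `P = ∏_{i<j}(x_i + x_j)` is symmetric and `alt(x^δ) P = alt(x^{2δ})`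
(the Vandermonde determinant in `x²`),
`L(x^δ alt(x^a) P) = L(x^a alt(x^δ) P) = L(x^a alt(x^{2δ})) = L(x^{2δ} alt(x^a)) = det(T(a_i + 2j))`.
-/

open Finset MvPolynomial

theorem Equiv.Perm.prod_Ioi_comp_eq_prod {n : ℕ} {R : Type*} [CommRing R]
    (σ : Equiv.Perm (Fin n)) {f : Fin n → Fin n → R} (hf : ∀ i j, f i j = f j i) :
    ∏ i, ∏ j ∈ Ioi i, f (σ i) (σ j) = ∏ i, ∏ j ∈ Ioi i, f i j := by
  -- twist `f` into an antisymmetric function and compare with `prod_Ioi_comp_eq_sign_mul_prod`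
  let g : Fin n → Fin n → R := fun i j => if i < j then f i j else if j < i then -f i j else 0
  have hg : ∀ i j, g i j = -g j i := by
    intro i j
    rcases lt_trichotomy i j with h | rfl | h
    · simp [g, h, h.not_gt, hf i j]
    · simp [g]
    · simp [g, h, h.not_gt, hf i j]
  have hcomp : ∏ i, ∏ j ∈ Ioi i, g (σ i) (σ j) = σ.sign * ∏ i, ∏ j ∈ Ioi i, f (σ i) (σ j) := by
    simp only [σ.sign_eq_prod_prod_Ioi, Units.coe_prod, Int.cast_prod, ← prod_mul_distrib]
    refine prod_congr rfl fun i _ => prod_congr rfl fun j hj => ?_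
    have hne : σ i ≠ σ j := σ.injective.ne (mem_Ioi.mp hj).ne
    rcases hne.lt_or_gt with h | h <;> simp [g, h, h.not_gt]
  have hid : ∏ i, ∏ j ∈ Ioi i, g i j = ∏ i, ∏ j ∈ Ioi i, f i j :=
    prod_congr rfl fun i _ => prod_congr rfl fun j hj => if_pos (mem_Ioi.mp hj)
  have key := σ.prod_Ioi_comp_eq_sign_mul_prod hg
  rw [hcomp, hid] at key
  have hunit : ((σ.sign : ℤ) : R) * σ.sign = 1 := by
    rw [← Int.cast_mul, ← Units.val_mul, Int.units_mul_self, Units.val_one, Int.cast_one]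
  simpa [← mul_assoc, hunit] using congrArg (((σ.sign : ℤ) : R) * ·) key

theorem Matrix.det_vandermonde_sq {R : Type*} [CommRing R] {n : ℕ} (x : Fin n → R) :
    (Matrix.vandermonde fun i => x i ^ 2).det =
      (Matrix.vandermonde x).det * ∏ i, ∏ j ∈ Ioi i, (x i + x j) := by
  rw [Matrix.det_vandermonde, Matrix.det_vandermonde, ← prod_mul_distrib]
  refine prod_congr rfl fun i _ => ?_
  rw [← prod_mul_distrib]
  exact prod_congr rfl fun j _ => by ring

namespace MvPolynomial

variable {R σ : Type*} [CommRing R]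

noncomputable def weightedCoeffSum (w : (σ →₀ ℕ) → R) : MvPolynomial σ R →ₗ[R] R :=
  (basisMonomials σ R).constr R w

theorem weightedCoeffSum_monomial (w : (σ →₀ ℕ) → R) (u : σ →₀ ℕ) (r : R) :
    weightedCoeffSum w (monomial u r) = r * w u := by
  have : monomial u r = r • (basisMonomials σ R u) := by simp [smul_monomial]
  rw [this, map_smul, weightedCoeffSum, Module.Basis.constr_basis, smul_eq_mul]

theorem weightedCoeffSum_monomial_one_mul (w : (σ →₀ ℕ) → R) (c : σ →₀ ℕ)
    (p : MvPolynomial σ R) :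
    weightedCoeffSum w (monomial c 1 * p) = weightedCoeffSum (fun u => w (c + u)) p := by
  induction p using induction_on' with
  | monomial u r => rw [monomial_mul, one_mul, weightedCoeffSum_monomial, weightedCoeffSum_monomial]
  | add p q hp hq => rw [mul_add, map_add, map_add, hp, hq]

variable [Fintype σ]

theorem prod_X_pow_eq_monomial_equivFunOnFinite (m : σ → ℕ) :
    ∏ i, (X i : MvPolynomial σ R) ^ m i = monomial (Finsupp.equivFunOnFinite.symm m) 1 := by
  rw [monomial_eq, C_1, one_mul, Finsupp.prod_fintype _ _ fun _ => pow_zero _]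
  simp

noncomputable def reversedSegre (s : ℤ → R) (N : ℕ) (j : σ) : MvPolynomial σ R :=
  ∑ k ∈ range (N + 1), C (s k) * X j ^ (N - k)

theorem coeff_prod_sum_range_C_mul_X_pow (f : ℕ → R) (K : ℕ) (v : σ →₀ ℕ) :
    coeff v (∏ j, ∑ m ∈ range K, C (f m) * X j ^ m) = ∏ j, if v j < K then f (v j) else 0 := by
  classical
  have hterm : ∀ g : σ → ℕ, ∏ j, C (f (g j)) * (X j : MvPolynomial σ R) ^ g j =
      monomial (Finsupp.equivFunOnFinite.symm g) (∏ j, f (g j)) := fun g => by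
    rw [prod_mul_distrib, prod_X_pow_eq_monomial_equivFunOnFinite, ← map_prod, C_mul_monomial,
      mul_one]
  simp only [prod_univ_sum, hterm, coeff_sum, coeff_monomial, Fintype.prod_ite_zero,
    Equiv.symm_apply_eq, Finsupp.equivFunOnFinite_apply, sum_ite_eq',
    Fintype.mem_piFinset, mem_range]

theorem coeff_prod_reversedSegre (t : ℤ → R) (ht : ∀ k < 0, t k = 0) (N : ℕ) (v : σ →₀ ℕ) :
    coeff v (∏ j, reversedSegre t N j) = ∏ j, t (N - v j) := by
  have hreflect : ∀ j : σ, reversedSegre t N j =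
      ∑ m ∈ range (N + 1), C (t (N - m)) * X j ^ m := fun j => by
    rw [reversedSegre, ← sum_range_reflect]
    refine sum_congr rfl fun k hk => ?_
    have hk : k ≤ N := Nat.lt_succ_iff.mp (mem_range.mp hk)
    rw [Nat.add_sub_cancel, Nat.sub_sub_self hk, Nat.cast_sub hk]
  simp only [hreflect, coeff_prod_sum_range_C_mul_X_pow]
  refine prod_congr rfl fun j _ => ?_
  split_ifs with h
  · rfl
  · exact (ht _ (by omega)).symm

theorem coeff_mul_prod_reversedSegre (t : ℤ → R) (N : ℕ) (ht_neg : ∀ k < 0, t k = 0)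
    (ht_gt : ∀ k > (N : ℤ), t k = 0) (e : σ →₀ ℕ) (p : MvPolynomial σ R) :
    coeff e (p * ∏ j, reversedSegre t N j) =
      weightedCoeffSum (fun u => ∏ j, t (N + u j - e j)) p := by
  classical
  induction p using induction_on' with
  | monomial u r =>
    rw [coeff_monomial_mul', weightedCoeffSum_monomial]
    split_ifs with hue
    · rw [coeff_prod_reversedSegre t ht_neg]
      congr 1
      refine prod_congr rfl fun j _ => ?_
      rw [Finsupp.tsub_apply, Nat.cast_sub (hue j)]
      congr 1
      ring
    · obtain ⟨j, hj⟩ := not_forall.mp (mt Finsupp.le_def.mpr hue)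
      rw [prod_eq_zero (mem_univ j) (ht_gt _ (by omega)), mul_zero]
  | add p q hp hq => rw [add_mul, coeff_add, map_add, hp, hq]

theorem weightedCoeffSum_prod_rename (T : ℕ → R) (e : Equiv.Perm σ) (p : MvPolynomial σ R) :
    weightedCoeffSum (fun u => ∏ i, T (u i)) (rename e p) =
      weightedCoeffSum (fun u => ∏ i, T (u i)) p := by
  induction p using induction_on' with
  | monomial u r =>
    rw [rename_monomial, weightedCoeffSum_monomial, weightedCoeffSum_monomial]
    congr 1
    exact (Fintype.prod_equiv e _ _ fun i => by rw [Finsupp.mapDomain_apply e.injective]).symm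
  | add p q hp hq => rw [map_add, map_add, map_add, hp, hq]

variable [DecidableEq σ]

noncomputable def alternant (p : MvPolynomial σ R) : MvPolynomial σ R :=
  ∑ e : Equiv.Perm σ, Equiv.Perm.sign e • rename e p

theorem alternant_mul_of_isSymmetric {q : MvPolynomial σ R} (hq : q.IsSymmetric)
    (p : MvPolynomial σ R) : alternant (p * q) = alternant p * q := by
  simp only [alternant, map_mul, hq _, sum_mul, smul_mul_assoc]

theorem map_alternant_mul {M : Type*} [AddCommGroup M] [Module R M]
    (L : MvPolynomial σ R →ₗ[R] M) (hL : ∀ (e : Equiv.Perm σ) p, L (rename e p) = L p)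
    (p q : MvPolynomial σ R) : L (alternant p * q) = L (p * alternant q) := by
  have key : ∀ e : Equiv.Perm σ, L (rename e p * q) = L (p * rename e.symm q) := fun e => by
    rw [← hL e (p * _), map_mul (rename e), rename_rename, e.self_comp_symm, rename_id_apply]
  simp only [alternant, sum_mul, mul_sum, smul_mul_assoc, mul_smul_comm, map_sum,
    Units.smul_def, map_zsmul, key]
  exact Fintype.sum_equiv (Equiv.inv _) _ _ fun e => by simp [Equiv.Perm.inv_def]

variable {d : ℕ}

theorem det_X_pow_eq_alternant (a : Fin d → ℕ) :
    (Matrix.of fun i j => (X j : MvPolynomial (Fin d) R) ^ a i).det =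
      alternant (∏ i, X i ^ a i) := by
  rw [← Matrix.det_transpose, Matrix.det_apply, alternant]
  refine sum_congr rfl fun e _ => ?_
  simp [map_prod]

theorem weightedCoeffSum_prod_X_pow_mul_det (T : ℕ → R) (b c : Fin d → ℕ) :
    weightedCoeffSum (fun u => ∏ i, T (u i))
        ((∏ i, X i ^ c i) * (Matrix.of fun i j => (X j : MvPolynomial (Fin d) R) ^ b i).det) =
      (Matrix.of fun i j => T (b i + c j)).det := by
  rw [Matrix.det_apply, Matrix.det_apply, mul_sum, map_sum]
  refine sum_congr rfl fun e _ => ?_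
  have hmon : (∏ i, X i ^ c i) * ∏ i, (Matrix.of fun i j => X j ^ b i) (e i) i =
      monomial (Finsupp.equivFunOnFinite.symm fun i => b (e i) + c i) (1 : R) := by
    rw [← prod_X_pow_eq_monomial_equivFunOnFinite, ← prod_mul_distrib]
    simp [pow_add, mul_comm]
  rw [mul_smul_comm, Units.smul_def, Units.smul_def, map_zsmul, hmon, weightedCoeffSum_monomial,
    one_mul]
  simp

theorem isSymmetric_prod_Ioi_add :
    IsSymmetric (∏ i : Fin d, ∏ j ∈ Ioi i, (X i + X j : MvPolynomial (Fin d) R)) := by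
  intro e
  simp only [map_prod, map_add, rename_X]
  exact e.prod_Ioi_comp_eq_prod (f := fun i j => X i + X j) fun i j => add_comm _ _

theorem alternant_prod_X_pow_two_mul :
    alternant (∏ i : Fin d, X i ^ (2 * (i : ℕ))) =
      alternant (∏ i : Fin d, (X i : MvPolynomial (Fin d) R) ^ (i : ℕ)) *
        ∏ i : Fin d, ∏ j ∈ Ioi i, (X i + X j) := by
  have hdet : ∀ m : ℕ, alternant (∏ i : Fin d, (X i : MvPolynomial (Fin d) R) ^ (m * i)) =
      (Matrix.vandermonde fun i => (X i : MvPolynomial (Fin d) R) ^ m).det := fun m => by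
    rw [← det_X_pow_eq_alternant, ← Matrix.det_transpose]
    congr 1
    ext i j
    simp [Matrix.vandermonde, pow_mul]
  have h1 := hdet 1
  simp only [one_mul, pow_one] at h1
  rw [hdet 2, h1, Matrix.det_vandermonde_sq]

theorem weightedCoeffSum_prod_X_pow_mul_det_mul_prod_Ioi_add (T : ℕ → R) (a : Fin d → ℕ) :
    weightedCoeffSum (fun u => ∏ i, T (u i))
        ((∏ i : Fin d, X i ^ (i : ℕ)) * ((Matrix.of fun i j => X j ^ a i).det *
          ∏ i : Fin d, ∏ j ∈ Ioi i, (X i + X j))) =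
      (Matrix.of fun i j : Fin d => T (a i + 2 * j)).det := by
  have hL := weightedCoeffSum_prod_rename (σ := Fin d) T
  calc _ = weightedCoeffSum (fun u => ∏ i, T (u i)) (alternant (∏ i, X i ^ a i) *
        ((∏ i : Fin d, X i ^ (i : ℕ)) * ∏ i : Fin d, ∏ j ∈ Ioi i, (X i + X j))) := by
        rw [det_X_pow_eq_alternant, mul_left_comm]
    _ = weightedCoeffSum (fun u => ∏ i, T (u i))
        ((∏ i, X i ^ a i) * alternant (∏ i : Fin d, X i ^ (2 * (i : ℕ)))) := by
        rw [map_alternant_mul _ hL, alternant_mul_of_isSymmetric isSymmetric_prod_Ioi_add,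
          alternant_prod_X_pow_two_mul]
    _ = weightedCoeffSum (fun u => ∏ i, T (u i))
        ((∏ i : Fin d, X i ^ (2 * (i : ℕ))) * alternant (∏ i, X i ^ a i)) := by
        rw [← map_alternant_mul _ hL, mul_comm]
    _ = _ := by rw [← det_X_pow_eq_alternant, weightedCoeffSum_prod_X_pow_mul_det]

end MvPolynomial

theorem stmt_6_general {R : Type*} [CommRing R] (n d : ℕ)
    (hd : d ≤ n)
    (lam : Fin d → ℕ) (s : ℤ → R) (hs : ∀ k : ℤ, k < 0 → s k = 0)
    (N : ℕ) (hN : ∀ i : Fin d, lam i + 2 * d ≤ N) :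
    MvPolynomial.coeff
      (Finsupp.equivFunOnFinite.symm fun j : Fin d => N + (2 * n - ((j : ℕ) + 1)))
      (Matrix.det (Matrix.of fun i j : Fin d =>
          MvPolynomial.X j ^ (lam i + (d - ((i : ℕ) + 1)))) *
        (∏ i : Fin d, ∏ j ∈ Finset.Ioi i,
          (MvPolynomial.X i + MvPolynomial.X j)) *
        ∏ j : Fin d, ∑ k ∈ Finset.range (N + 1),
          MvPolynomial.C (s k) * MvPolynomial.X j ^ (N - k))
    = Matrix.det (Matrix.of fun i j : Fin d =>
        s ((lam i : ℤ) - (2 * (n : ℤ) - (d : ℤ) + 1 - (((i : ℕ) : ℤ) + 1)) +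
          2 * (((j : ℕ) : ℤ) - ((i : ℕ) : ℤ)))) := by
  -- truncating `s` above `N` changes neither `Ŝ_N` nor the entries of the determinant
  set t : ℤ → R := fun k => if k ≤ N then s k else 0
  have hsegre : ∀ j : Fin d, ∑ k ∈ Finset.range (N + 1), C (s k) * X j ^ (N - k) =
      reversedSegre t N j := fun j =>
    Finset.sum_congr rfl fun k hk => by
      simp only [t, if_pos (show (k : ℤ) ≤ N by have := Finset.mem_range.mp hk; omega)]
  calc _ = weightedCoeffSum (fun u => ∏ j, t ((u j : ℤ) + 1 - 2 * n))
        ((∏ i : Fin d, X i ^ (i : ℕ)) *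
          ((Matrix.of fun i j : Fin d => X j ^ (lam i + (d - ((i : ℕ) + 1)))).det *
            (∏ i : Fin d, ∏ j ∈ Finset.Ioi i, (X i + X j)))) := by
        rw [Finset.prod_congr rfl fun j _ => hsegre j,
          coeff_mul_prod_reversedSegre t N (fun k hk => by simp [t, hs k hk])
            (fun k hk => if_neg (by omega)),
          prod_X_pow_eq_monomial_equivFunOnFinite, weightedCoeffSum_monomial_one_mul]
        congr 2 with u
        refine Finset.prod_congr rfl fun j _ => congrArg t ?_
        simp only [Finsupp.coe_add, Pi.add_apply, Finsupp.coe_equivFunOnFinite_symm]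
        omega
    _ = _ := by
        rw [weightedCoeffSum_prod_X_pow_mul_det_mul_prod_Ioi_add fun k => t (k + 1 - 2 * n)]
        congr 1
        ext i j
        have := hN i
        simp only [Matrix.of_apply, t]
        rw [if_pos (by omega)]
        congr 1
        omega

/-- Algebraic core of Proposition 5.6 (type C Grassmann bundle): the coefficient of
`∏_j t_j^{N+2n-j}` in `det(t_j^{λ_i+d-i}) ⬝ ∏_{i<j}(t_i + t_j) ⬝ ∏_j Ŝ_N(t_j)` equals
`det(s(λ_i - (2n - d + 1 - i) + 2(j - i)))`. -/
theorem stmt_6 {R : Type*} [CommRing R] (n d : ℕ) (hn : 1 ≤ n)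
    (hd1 : 1 ≤ d) (hd : d ≤ n)
    (lam : Fin d → ℕ) (s : ℤ → R) (hs : ∀ k : ℤ, k < 0 → s k = 0)
    (N : ℕ) (hN : ∀ i : Fin d, lam i + 2 * d ≤ N) :
    MvPolynomial.coeff
      (Finsupp.equivFunOnFinite.symm fun j : Fin d => N + (2 * n - ((j : ℕ) + 1)))
      (Matrix.det (Matrix.of fun i j : Fin d =>
          MvPolynomial.X j ^ (lam i + (d - ((i : ℕ) + 1)))) *
        (∏ i : Fin d, ∏ j ∈ Finset.Ioi i,
          (MvPolynomial.X i + MvPolynomial.X j)) *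
        ∏ j : Fin d, ∑ k ∈ Finset.range (N + 1),
          MvPolynomial.C (s k) * MvPolynomial.X j ^ (N - k))
    = Matrix.det (Matrix.of fun i j : Fin d =>
        s ((lam i : ℤ) - (2 * (n : ℤ) - (d : ℤ) + 1 - (((i : ℕ) : ℤ) + 1)) +
          2 * (((j : ℕ) : ℤ) - ((i : ℕ) : ℤ)))) :=
  stmt_6_general n d hd lam s hs N hN
end

section
/- Let R be a commutative ring and r ≥ 2 an integer. In the multivariate polynomial ring R[t_1,…,t_{r−1}], the coefficient of the monomial t_1^{r−1}·t_2^{r−1}⋯t_{r−1}^{r−1} in the product (∏_{i=1}^{r−1} t_i^{i}) · ∏_{1≤i<j≤r−1}(t_i − t_j) equals 1 (where for r = 2 the product over pairs is empty, hence equal to 1). -/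
/-!
For the degree-lexicographic order with `X 0 > X 1 > ⋯`, every factor `X i - X j` with `i < j`
has leading term `X i`. Hence the whole product is monic, and its leading monomial has exponent
`(i + 1) + #{j | i < j} = n` in every variable `X i`. The coefficient of the leading monomial of
a monic polynomial is `1`.
-/

open MvPolynomial Finset Finsupp

namespace MonomialOrder

variable {σ R : Type*} [CommRing R] {m : MonomialOrder σ}

theorem Monic.degree_mul [Nontrivial R] {f g : MvPolynomial σ R} (hf : m.Monic f)
    (hg : m.Monic g) : m.degree (f * g) = m.degree f + m.degree g := by
  apply degree_mul_of_mul_leadingCoeff_ne_zero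
  simp [hf.leadingCoeff_eq_one, hg.leadingCoeff_eq_one]

theorem Monic.degree_pow [Nontrivial R] {f : MvPolynomial σ R} (hf : m.Monic f) (k : ℕ) :
    m.degree (f ^ k) = k • m.degree f := by
  apply degree_pow_of_pow_leadingCoeff_ne_zero
  simp [hf.leadingCoeff_eq_one]

theorem Monic.degree_prod {ι : Type*} {P : ι → MvPolynomial σ R} {s : Finset ι}
    (H : ∀ i ∈ s, m.Monic (P i)) : m.degree (∏ i ∈ s, P i) = ∑ i ∈ s, m.degree (P i) :=
  degree_prod_of_regular fun i hi => (H i hi).leadingCoeff_eq_one ▸ isRegular_one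

theorem degree_X_sub_X [Nontrivial R] {i j : σ} (h : single j 1 ≺[m] single i 1) :
    m.degree (X i - X j : MvPolynomial σ R) = single i 1 := by
  rw [degree_sub_of_lt] <;> simp [degree_X, h]

theorem monic_X_sub_X {i j : σ} (h : single j 1 ≺[m] single i 1) :
    m.Monic (X i - X j : MvPolynomial σ R) := by
  nontriviality R
  rw [Monic, leadingCoeff_sub_of_lt] <;> simp [degree_X, h]

end MonomialOrder

open MonomialOrder

section

variable {R : Type*} [CommRing R] {n : ℕ}

theorem monic_prod_Ioi_X_sub_X (i : Fin n) :
    degLex.Monic (∏ j ∈ Ioi i, (X i - X j : MvPolynomial (Fin n) R)) :=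
  Monic.prod fun _ hj => monic_X_sub_X (degLex_single_lt_iff.mpr (mem_Ioi.mp hj))

theorem degree_prod_Ioi_X_sub_X [Nontrivial R] (i : Fin n) :
    degLex.degree (∏ j ∈ Ioi i, (X i - X j : MvPolynomial (Fin n) R)) =
      (n - 1 - i) • single i 1 := by
  rw [Monic.degree_prod fun _ hj => monic_X_sub_X (degLex_single_lt_iff.mpr (mem_Ioi.mp hj)),
    sum_congr rfl fun _ hj => degree_X_sub_X (degLex_single_lt_iff.mpr (mem_Ioi.mp hj)),
    sum_const, Fin.card_Ioi]

theorem monic_prod_X_sub_X :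
    degLex.Monic (∏ i : Fin n, ∏ j ∈ Ioi i, (X i - X j : MvPolynomial (Fin n) R)) :=
  Monic.prod fun i _ => monic_prod_Ioi_X_sub_X i

theorem degree_prod_X_sub_X [Nontrivial R] :
    degLex.degree (∏ i : Fin n, ∏ j ∈ Ioi i, (X i - X j : MvPolynomial (Fin n) R)) =
      ∑ i : Fin n, (n - 1 - i) • single i 1 := by
  rw [Monic.degree_prod fun i _ => monic_prod_Ioi_X_sub_X i]
  exact sum_congr rfl fun i _ => degree_prod_Ioi_X_sub_X i

theorem monic_prod_X_pow :
    degLex.Monic (∏ i : Fin n, (X i : MvPolynomial (Fin n) R) ^ ((i : ℕ) + 1)) :=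
  Monic.prod fun _ _ => monic_X.pow

theorem degree_prod_X_pow [Nontrivial R] :
    degLex.degree (∏ i : Fin n, (X i : MvPolynomial (Fin n) R) ^ ((i : ℕ) + 1)) =
      ∑ i : Fin n, ((i : ℕ) + 1) • single i 1 := by
  rw [Monic.degree_prod fun _ _ => monic_X.pow]
  exact sum_congr rfl fun i _ => by rw [monic_X.degree_pow, degree_X]

theorem coeff_const_prod_X_pow_succ_mul_prod_X_sub_X :
    coeff (equivFunOnFinite.symm fun _ : Fin n => n)
      ((∏ i : Fin n, X i ^ ((i : ℕ) + 1)) * ∏ i : Fin n, ∏ j ∈ Ioi i, (X i - X j)) = (1 : R) := by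
  nontriviality R
  convert (monic_prod_X_pow.mul monic_prod_X_sub_X).coeff_degree using 2
  rw [monic_prod_X_pow.degree_mul monic_prod_X_sub_X, degree_prod_X_pow, degree_prod_X_sub_X,
    ← sum_add_distrib, equivFunOnFinite_symm_eq_sum]
  refine sum_congr rfl fun i _ => ?_
  rw [← add_smul, smul_single_one]
  congr
  omega

end

theorem stmt_10_general {R : Type*} [CommRing R] (r : ℕ) :
    MvPolynomial.coeff
      (Finsupp.equivFunOnFinite.symm fun _ : Fin (r - 1) => r - 1)
      ((∏ i : Fin (r - 1), MvPolynomial.X i ^ ((i : ℕ) + 1)) *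
        ∏ i : Fin (r - 1), ∏ j ∈ Finset.Ioi i,
          (MvPolynomial.X i - MvPolynomial.X j))
    = (1 : R) :=
  coeff_const_prod_X_pow_succ_mul_prod_X_sub_X

/-- The key computation in the "useful particular case" (equation (2.2)): the coefficient
of `t_1^{r-1}⋯t_{r-1}^{r-1}` in `(∏_i t_i^i) ⬝ ∏_{i<j}(t_i - t_j)` equals `1`. -/
theorem stmt_10 {R : Type*} [CommRing R] (r : ℕ) (hr : 2 ≤ r) :
    MvPolynomial.coeff
      (Finsupp.equivFunOnFinite.symm fun _ : Fin (r - 1) => r - 1)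
      ((∏ i : Fin (r - 1), MvPolynomial.X i ^ ((i : ℕ) + 1)) *
        ∏ i : Fin (r - 1), ∏ j ∈ Finset.Ioi i,
          (MvPolynomial.X i - MvPolynomial.X j))
    = (1 : R) :=
  stmt_10_general r
end
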